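/- arXiv:1602.04850 — 7 statements merged into one kernel-verified Lean document; each statement's English description precedes it below -/
import Mathlib

section
/- For all real x with 0 < x < 1, we have 3·Γ(3x)·Γ(x) + x·Γ(x)²·Γ(2x) − 6·Γ(2x)² > 0. -/
/-!
Write `a, b, c` for `Γ(x + 1), Γ(2x + 1), Γ(3x + 1)`; by `Γ(s + 1) = sΓ(s)` the claim, multiplied
by `2x²`, is `3b² < 2ac + a²b`. Since
`(ac)²(2ac + a²b - 3b²) = (ac - b²)²(2ac + b²) + b(a⁴c² - b⁵)`, it suffices that `b⁵ < a⁴c²`.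
By Gauss's product formula `a⁴c²/b⁵ = ∏_{k ≥ 1} k(k + 2x)⁵ / ((k + x)⁴(k + 3x)²)`; every factor
with `k ≥ 2` is at least `1`, and the first five factors already have product greater than `1`.
-/

open Real Filter Finset Topology

theorem three_mul_sq_lt_of_pow_five_lt {a b c : ℝ} (ha : 0 < a) (hb : 0 < b) (hc : 0 < c)
    (h : b ^ 5 < a ^ 4 * c ^ 2) : 3 * b ^ 2 < 2 * (a * c) + a ^ 2 * b := by
  have key : (a * c) ^ 2 * (2 * (a * c) + a ^ 2 * b - 3 * b ^ 2)
      = (a * c - b ^ 2) ^ 2 * (2 * (a * c) + b ^ 2) + b * (a ^ 4 * c ^ 2 - b ^ 5) := by ring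
  have hpos : 0 < (a * c) ^ 2 * (2 * (a * c) + a ^ 2 * b - 3 * b ^ 2) := by
    have := mul_pos hb (sub_pos.2 h)
    rw [key]
    positivity
  linarith [pos_of_mul_pos_right hpos (by positivity)]

theorem pow_four_mul_sq_le_mul_pow_five {x k : ℝ} (hx : 0 ≤ x) (hk : 2 * x ≤ k) :
    (k + x) ^ 4 * (k + 3 * x) ^ 2 ≤ k * (k + 2 * x) ^ 5 := by
  have hk0 : 0 ≤ k := by linarith
  rw [← sub_nonneg, show k * (k + 2 * x) ^ 5 - (k + x) ^ 4 * (k + 3 * x) ^ 2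
      = x ^ 2 * (k ^ 4 + 4 * k ^ 3 * x + k ^ 2 * x ^ 2 - 10 * k * x ^ 3 - 9 * x ^ 4) by ring]
  refine mul_nonneg (sq_nonneg x) ?_
  nlinarith [pow_le_pow_left₀ (by linarith) hk 3, mul_nonneg hk0 hx, pow_nonneg hx 3,
    mul_le_mul_of_nonneg_left hk (mul_nonneg hk0 (pow_nonneg hx 2))]

noncomputable def gaussFactor (x k : ℝ) : ℝ :=
  k * (k + 2 * x) ^ 5 / ((k + x) ^ 4 * (k + 3 * x) ^ 2)

theorem one_le_gaussFactor {x k : ℝ} (hx : 0 ≤ x) (hk : 2 * x ≤ k) (hk0 : 0 < k) :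
    1 ≤ gaussFactor x k :=
  (one_le_div (by positivity)).2 (pow_four_mul_sq_le_mul_pow_five hx hk)

theorem GammaSeq_pow_mul_pow_div_eq_prod_gaussFactor {x : ℝ} (hx : 0 ≤ x) {n : ℕ}
    (hn : n ≠ 0) :
    GammaSeq (x + 1) n ^ 4 * GammaSeq (3 * x + 1) n ^ 2 /
        (GammaSeq (2 * x + 1) n ^ 5 * GammaSeq 1 n)
      = ∏ j ∈ range (n + 1), gaussFactor x (j + 1) := by
  have hn' : (0 : ℝ) < n := by positivity
  have hpow : ∀ m : ℕ, (n : ℝ) ^ (m * x + 1) = ((n : ℝ) ^ x) ^ m * n := fun m => by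
    rw [rpow_add_one hn'.ne', mul_comm (m : ℝ) x, rpow_mul_natCast hn'.le]
  have e2 := hpow 2
  have e3 := hpow 3
  push_cast at e2 e3
  have hprod_ne : ∀ s : ℝ, 0 ≤ s → ∏ j ∈ range (n + 1), (s + 1 + j) ≠ 0 := fun s hs =>
    prod_ne_zero_iff.2 fun j _ => by positivity
  have hshift : ∀ s : ℝ,
      ∏ j ∈ range (n + 1), ((j : ℝ) + 1 + s) = ∏ j ∈ range (n + 1), (s + 1 + j) :=
    fun s => prod_congr rfl fun j _ => by ring
  have h1 := hprod_ne x hx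
  have h2 := hprod_ne (2 * x) (by positivity)
  have h3 := hprod_ne (3 * x) (by positivity)
  have h0 : ∏ j ∈ range (n + 1), ((j : ℝ) + 1) ≠ 0 := prod_ne_zero_iff.2 fun j _ => by positivity
  have hf : (n.factorial : ℝ) ≠ 0 := by positivity
  have hnx : (n : ℝ) ^ x ≠ 0 := by positivity
  simp only [gaussFactor, GammaSeq, prod_div_distrib, prod_mul_distrib, prod_pow, hshift, rpow_one]
  rw [rpow_add_one hn'.ne', e2, e3]
  simp only [add_comm (1 : ℝ)]
  field_simp

theorem tendsto_prod_gaussFactor {x : ℝ} (hx : 0 ≤ x) :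
    Tendsto (fun n => ∏ j ∈ range n, gaussFactor x (j + 1)) atTop
      (𝓝 (Gamma (x + 1) ^ 4 * Gamma (3 * x + 1) ^ 2 / Gamma (2 * x + 1) ^ 5)) := by
  have hlim := (((GammaSeq_tendsto_Gamma (x + 1)).pow 4).mul
    ((GammaSeq_tendsto_Gamma (3 * x + 1)).pow 2)).div
    (((GammaSeq_tendsto_Gamma (2 * x + 1)).pow 5).mul (GammaSeq_tendsto_Gamma 1))
    (by rw [Gamma_one, mul_one]; exact pow_ne_zero _ (Gamma_pos_of_pos (by positivity)).ne')
  rw [Gamma_one, mul_one] at hlim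
  rw [← tendsto_add_atTop_iff_nat 1]
  refine hlim.congr' (eventually_atTop.2 ⟨1, fun n hn => ?_⟩)
  exact GammaSeq_pow_mul_pow_div_eq_prod_gaussFactor hx (by omega)

theorem one_lt_prod_range_five_gaussFactor {x : ℝ} (hx : 0 < x) (hx1 : x < 1) :
    1 < ∏ j ∈ range 5, gaussFactor x (j + 1) := by
  simp only [gaussFactor, prod_div_distrib]
  rw [one_lt_div (prod_pos fun j _ => by positivity), ← sub_pos]
  -- the difference, expanded with nonnegative coefficients in `x` and `1 - x`
  have hdiff : ∏ j ∈ range 5, ((j : ℝ) + 1) * ((j : ℝ) + 1 + 2 * x) ^ 5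
      - ∏ j ∈ range 5, (((j : ℝ) + 1 + x) ^ 4 * ((j : ℝ) + 1 + 3 * x) ^ 2)
      = (1 - x) * (
          4370319360000 * x ^ 2 + 82917070848000 * x ^ 3 + 739338389222400 * x ^ 4
          + 4129811271513600 * x ^ 5 + 16246646768538816 * x ^ 6 + 47966952399878016 * x ^ 7
          + 110576303196798096 * x ^ 8 + 204442466161547376 * x ^ 9 + 309074524241632020 * x ^ 10
          + 387796602321645120 * x ^ 11 + 409021254462145995 * x ^ 12
          + 367538341742447445 * x ^ 13 + 286617820094682660 * x ^ 14
          + 200288683879048260 * x ^ 15 + 132975794507484960 * x ^ 16 + 91713666306906360 * x ^ 17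
          + 71263839962689740 * x ^ 18 + 62972926905782340 * x ^ 19 + 60213077645840190 * x ^ 20
          + 59459768557106490 * x ^ 21 + 59292001331350380 * x ^ 22 + 59261760626791980 * x ^ 23
          + 59257396580315880 * x ^ 24 + 59256899414419680 * x ^ 25 + 59256855535746384 * x ^ 26
          + 59256852622006284 * x ^ 27 + 59256852484192479 * x ^ 28 + 59256852480059049 * x ^ 29
          + 59256852480000000 * x ^ 30)
        + 59256852480000000 * x ^ 31 := by
    simp only [prod_range_succ, prod_range_zero]
    push_cast
    ring
  have : 0 < 1 - x := sub_pos.2 hx1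
  rw [hdiff]
  positivity

theorem Gamma_two_mul_add_one_pow_five_lt {x : ℝ} (hx : 0 < x) (hx1 : x < 1) :
    Gamma (2 * x + 1) ^ 5 < Gamma (x + 1) ^ 4 * Gamma (3 * x + 1) ^ 2 := by
  rw [← one_lt_div (pow_pos (Gamma_pos_of_pos (by positivity)) 5)]
  refine (one_lt_prod_range_five_gaussFactor hx hx1).trans_le <|
    ge_of_tendsto (tendsto_prod_gaussFactor hx.le) (eventually_atTop.2 ⟨5, fun n hn => ?_⟩)
  refine prod_le_prod_of_subset_of_one_le (range_subset_range.2 hn)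
    (fun j _ => by unfold gaussFactor; positivity) fun j _ hj => ?_
  have : (5 : ℝ) ≤ j := by exact_mod_cast not_lt.1 (mt mem_range.2 hj)
  exact one_le_gaussFactor hx.le (by linarith) (by positivity)

theorem gamma_combination_pos :
    ∀ x : ℝ, 0 < x → x < 1 →
      3 * Real.Gamma (3 * x) * Real.Gamma x
        + x * (Real.Gamma x) ^ 2 * Real.Gamma (2 * x)
        - 6 * (Real.Gamma (2 * x)) ^ 2 > 0 := by
  intro x hx hx1
  have key := three_mul_sq_lt_of_pow_five_lt (Gamma_pos_of_pos (by positivity : 0 < x + 1))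
    (Gamma_pos_of_pos (by positivity)) (Gamma_pos_of_pos (by positivity))
    (Gamma_two_mul_add_one_pow_five_lt hx hx1)
  rw [Gamma_add_one hx.ne', Gamma_add_one (by positivity), Gamma_add_one (by positivity)] at key
  have h : 0 < 2 * x ^ 2 * (3 * Gamma (3 * x) * Gamma x + x * Gamma x ^ 2 * Gamma (2 * x)
      - 6 * Gamma (2 * x) ^ 2) := by linear_combination key
  exact pos_of_mul_pos_right h (by positivity)
end

section
/- Let 1/2 < β < 1 and k ≥ 1 an integer with k(2β−1) < 1. Set a_i = i^{−β} for i ≥ 1. Then there is a constant c > 0 such that for all sufficiently large h, ∑_{1 ≤ j_1 < j_2 < ⋯ < j_k ≤ h} ∏_{s=1}^k a_{j_s}·a_{h+j_s} ≥ c·h^{k(1−2β)}. -/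
theorem leading_term_lower_bound (β : ℝ) (hβ1 : 1 / 2 < β) (hβ2 : β < 1)
    (k : ℕ) (hk : 1 ≤ k) (hkβ : (k : ℝ) * (2 * β - 1) < 1)
    (a : ℕ → ℝ) (ha : ∀ i : ℕ, 1 ≤ i → a i = (i : ℝ) ^ (-β)) :
    ∃ c : ℝ, 0 < c ∧ ∃ H : ℕ, ∀ h : ℕ, H ≤ h →
      c * (h : ℝ) ^ ((k : ℝ) * (1 - 2 * β)) ≤
        ∑ s ∈ (Finset.Icc 1 h).powersetCard k, ∏ j ∈ s, a j * a (h + j) := by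
  classical
  refine ⟨(2:ℝ) ^ (-(k:ℝ) * β) / ((2:ℝ) ^ k * (k.factorial : ℝ)), by positivity,
    2 * k, ?_⟩
  intro h hh
  have hk1 : 1 ≤ h := by omega
  have hx : (0:ℝ) < (h:ℝ) := by exact_mod_cast hk1
  set x := (h:ℝ) with hxdef
  have hm0 : (0:ℝ) ≤ x ^ (-β) * (2 * x) ^ (-β) := by positivity
  set m : ℝ := x ^ (-β) * (2 * x) ^ (-β) with hm
  -- per-term lower bound
  have step1 : ∀ s ∈ (Finset.Icc 1 h).powersetCard k,
      m ^ k ≤ ∏ j ∈ s, a j * a (h + j) := by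
    intro s hs
    rw [Finset.mem_powersetCard] at hs
    obtain ⟨hsub, hcard⟩ := hs
    calc m ^ k = ∏ _j ∈ s, m := by rw [Finset.prod_const, hcard]
      _ ≤ ∏ j ∈ s, a j * a (h + j) := by
        apply Finset.prod_le_prod (fun _ _ => hm0)
        intro j hj
        have hj' := hsub hj
        rw [Finset.mem_Icc] at hj'
        rw [ha j hj'.1, ha (h + j) (by omega)]
        have hjpos : (0:ℝ) < (j:ℝ) := by exact_mod_cast hj'.1
        apply mul_le_mul
        · refine Real.rpow_le_rpow_of_nonpos hjpos ?_ (by linarith)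
          rw [hxdef]; exact_mod_cast hj'.2
        · apply Real.rpow_le_rpow_of_nonpos (by positivity) _ (by linarith)
          push_cast
          have : (j:ℝ) ≤ x := by rw [hxdef]; exact_mod_cast hj'.2
          linarith
        · positivity
        · positivity
  have hcard : ((Finset.Icc 1 h).powersetCard k).card = h.choose k := by
    rw [Finset.card_powersetCard, Nat.card_Icc]; norm_num
  -- sum lower bound
  have step2 : (h.choose k : ℝ) * m ^ k ≤
      ∑ s ∈ (Finset.Icc 1 h).powersetCard k, ∏ j ∈ s, a j * a (h + j) := by
    have := Finset.card_nsmul_le_sum ((Finset.Icc 1 h).powersetCard k)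
      (fun s => ∏ j ∈ s, a j * a (h + j)) (m ^ k) step1
    rw [hcard] at this
    simpa [nsmul_eq_mul] using this
  refine le_trans ?_ step2
  -- binomial lower bound: h^k ≤ 2^k * k! * choose
  have hchoose : (x ^ k) / ((2:ℝ) ^ k * (k.factorial : ℝ)) ≤ (h.choose k : ℝ) := by
    rw [div_le_iff₀ (by positivity)]
    have hnat : h ^ k ≤ (h.choose k) * (2 ^ k * k.factorial) := by
      have h1 : (h + 1 - k) ^ k ≤ h.descFactorial k := Nat.pow_sub_le_descFactorial h k
      have h2 : h.descFactorial k = k.factorial * h.choose k :=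
        Nat.descFactorial_eq_factorial_mul_choose h k
      have h3 : h ≤ 2 * (h + 1 - k) := by omega
      calc h ^ k ≤ (2 * (h + 1 - k)) ^ k := Nat.pow_le_pow_left h3 k
        _ = 2 ^ k * (h + 1 - k) ^ k := by rw [mul_pow]
        _ ≤ 2 ^ k * (k.factorial * h.choose k) := by
            rw [← h2]; exact Nat.mul_le_mul_left _ h1
        _ = (h.choose k) * (2 ^ k * k.factorial) := by ring
    rw [hxdef]; exact_mod_cast hnat
  -- now pure rpow algebra
  have hm' : m = (2:ℝ) ^ (-β) * x ^ (-(2*β)) := by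
    rw [hm, Real.mul_rpow (by norm_num) hx.le, mul_left_comm, ← Real.rpow_add hx]
    ring_nf
  have key : (2:ℝ) ^ (-(k:ℝ) * β) / ((2:ℝ) ^ k * (k.factorial : ℝ)) *
      x ^ ((k:ℝ) * (1 - 2 * β)) ≤ (h.choose k : ℝ) * m ^ k := by
    have hmk : m ^ k = (2:ℝ) ^ (-(k:ℝ) * β) * x ^ (-(2*β) * k) := by
      rw [hm', mul_pow, ← Real.rpow_natCast ((2:ℝ) ^ (-β)),
        ← Real.rpow_natCast (x ^ (-(2*β))),
        ← Real.rpow_mul (by norm_num : (0:ℝ) ≤ 2), ← Real.rpow_mul hx.le]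
      ring_nf
    rw [hmk]
    calc (2:ℝ) ^ (-(k:ℝ) * β) / ((2:ℝ) ^ k * (k.factorial : ℝ)) *
        x ^ ((k:ℝ) * (1 - 2 * β))
        = (x ^ (k:ℕ)) / ((2:ℝ) ^ k * (k.factorial : ℝ)) *
          ((2:ℝ) ^ (-(k:ℝ) * β) * x ^ (-(2*β) * k)) := by
          have he : (k:ℝ) * (1 - 2 * β) = (k:ℝ) + -(2*β) * k := by ring
          rw [he, Real.rpow_add hx, Real.rpow_natCast x k]
          ring
      _ ≤ (h.choose k : ℝ) * ((2:ℝ) ^ (-(k:ℝ) * β) * x ^ (-(2*β) * k)) := by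
          apply mul_le_mul_of_nonneg_right hchoose (by positivity)
  exact key
end

section
/- Let -1/2 < d < 0 and define γ(h) = (Γ(1−2d)/(Γ(1−d)·Γ(d)))·Γ(h+d)/Γ(h+1−d) for integers h ≥ 0. Then γ(0) + 2·∑_{h=1}^∞ γ(h) = 0. -/
/-!
With `r x = Γ(x + a) / Γ(x + b)`, the functional equation `Γ(s + 1) = s Γ(s)` gives
`r x - r (x + 1) = (b - a) Γ(x + a) / Γ(x + b + 1)`, so `∑ₙ Γ(n + a) / Γ(n + b + 1)`
telescopes to `r 0 / (b - a)` once `r x → 0`; for `0 < b - a < 1` this limit follows from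
log-convexity of `Γ`, which gives `r x ≤ (x + b - 1) ^ (a - b)`. For `a = 1 + d`, `b = 1 - d`
the value `r 0 / (b - a)` is `-Γ(d) / (2 Γ(1 - d))`, which exactly cancels the `h = 0` term
`Γ(d) / Γ(1 - d)`.
-/

open Real Filter Topology

lemma Gamma_add_one_sub_le_rpow_mul {y t : ℝ} (hy : 0 < y) (ht₀ : 0 < t) (ht₁ : t < 1) :
    Gamma (y + 1 - t) ≤ y ^ (-t) * Gamma (y + 1) := by
  have hΓ : 0 < Gamma (y + 1) := Gamma_pos_of_pos (by linarith)
  calc Gamma (y + 1 - t) = Gamma (t * y + (1 - t) * (y + 1)) := by ring_nf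
    _ ≤ Gamma y ^ t * Gamma (y + 1) ^ (1 - t) :=
      Gamma_mul_add_mul_le_rpow_Gamma_mul_rpow_Gamma hy (by linarith) ht₀ (by linarith) (by ring)
    _ = y ^ (-t) * Gamma (y + 1) := by
      have hΓy : Gamma y = Gamma (y + 1) / y := by rw [Gamma_add_one hy.ne']; field_simp
      rw [hΓy, div_rpow hΓ.le hy.le, rpow_neg hy.le, div_eq_inv_mul, mul_assoc, ← rpow_add hΓ,
        add_sub_cancel, rpow_one]

lemma tendsto_Gamma_add_div_Gamma_add {a b : ℝ} (hab : a < b) (hba : b < a + 1) :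
    Tendsto (fun x => Gamma (x + a) / Gamma (x + b)) atTop (𝓝 0) := by
  have hbound : ∀ᶠ x in atTop, Gamma (x + a) / Gamma (x + b) ≤ (x + b - 1) ^ (a - b) := by
    filter_upwards [eventually_gt_atTop (1 - b)] with x hx
    have key := Gamma_add_one_sub_le_rpow_mul (y := x + b - 1) (by linarith)
      (by linarith : 0 < b - a) (by linarith)
    rw [show x + b - 1 + 1 - (b - a) = x + a by ring, sub_add_cancel, neg_sub] at key
    rwa [div_le_iff₀ (Gamma_pos_of_pos (by linarith))]
  have hnonneg : ∀ᶠ x in atTop, 0 ≤ Gamma (x + a) / Gamma (x + b) := by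
    filter_upwards [eventually_gt_atTop (-a)] with x hx
    exact div_nonneg (Gamma_pos_of_pos (by linarith)).le (Gamma_pos_of_pos (by linarith)).le
  have hlim : Tendsto (fun x : ℝ => (x + b - 1) ^ (a - b)) atTop (𝓝 0) := by
    have := (tendsto_rpow_neg_atTop (by linarith : 0 < b - a)).comp
      (tendsto_atTop_add_const_right atTop (b - 1) tendsto_id)
    simpa [Function.comp_def, add_sub_assoc] using this
  exact squeeze_zero' hnonneg hbound hlim

lemma Gamma_div_Gamma_sub_Gamma_div_Gamma_add_one {x a b : ℝ} (ha : x + a ≠ 0)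
    (hb : Gamma (x + b) ≠ 0) :
    Gamma (x + a) / Gamma (x + b) - Gamma (x + 1 + a) / Gamma (x + 1 + b) =
      (b - a) * (Gamma (x + a) / Gamma (x + b + 1)) := by
  have hb' : x + b ≠ 0 := fun h => hb (by rw [h, Gamma_zero])
  rw [add_right_comm x 1 a, add_right_comm x 1 b, Gamma_add_one ha, Gamma_add_one hb']
  field_simp
  ring

lemma hasSum_Gamma_add_div_Gamma_add_add_one {a b : ℝ} (ha : 0 < a) (hab : a < b)
    (hba : b < a + 1) :
    HasSum (fun n : ℕ => Gamma (n + a) / Gamma (n + b + 1)) (Gamma a / Gamma b / (b - a)) := by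
  set r : ℕ → ℝ := fun n => Gamma (n + a) / Gamma (n + b)
  have hn : ∀ n : ℕ, (0 : ℝ) ≤ n := fun n => n.cast_nonneg
  have hterm : ∀ n : ℕ, Gamma (n + a) / Gamma (n + b + 1) = (r n - r (n + 1)) / (b - a) := by
    intro n
    rw [eq_div_iff (by linarith), mul_comm]
    push_cast [r]
    exact (Gamma_div_Gamma_sub_Gamma_div_Gamma_add_one (by linarith [hn n])
      (Gamma_pos_of_pos (by linarith [hn n])).ne').symm
  have hnonneg : ∀ n : ℕ, 0 ≤ Gamma (n + a) / Gamma (n + b + 1) := fun n =>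
    div_nonneg (Gamma_pos_of_pos (by linarith [hn n])).le
      (Gamma_pos_of_pos (by linarith [hn n])).le
  have hr : Tendsto r atTop (𝓝 0) :=
    (tendsto_Gamma_add_div_Gamma_add hab hba).comp tendsto_natCast_atTop_atTop
  refine (hasSum_iff_tendsto_nat_of_nonneg hnonneg _).2 ?_
  simp_rw [hterm, ← Finset.sum_div, Finset.sum_range_sub']
  convert (hr.const_sub (r 0)).div_const (b - a) using 2
  simp [r]

theorem farima_spectral_density_zero (d : ℝ) (hd1 : -(1 / 2) < d) (hd2 : d < 0)
    (γ : ℕ → ℝ)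
    (hγ : ∀ h : ℕ, γ h = Real.Gamma (1 - 2 * d) / (Real.Gamma (1 - d) * Real.Gamma d) *
        (Real.Gamma ((h : ℝ) + d) / Real.Gamma ((h : ℝ) + 1 - d))) :
    γ 0 + 2 * ∑' h : ℕ, γ (h + 1) = 0 := by
  set C := Gamma (1 - 2 * d) / (Gamma (1 - d) * Gamma d)
  have hterm : ∀ h : ℕ, γ (h + 1) = C * (Gamma (h + (1 + d)) / Gamma (h + (1 - d) + 1)) := by
    intro h
    rw [hγ]
    push_cast
    ring_nf
  have hsum :
      HasSum (fun h : ℕ => γ (h + 1)) (C * (Gamma (1 + d) / Gamma (1 - d) / (-2 * d))) := by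
    have := (hasSum_Gamma_add_div_Gamma_add_add_one (a := 1 + d) (b := 1 - d) (by linarith)
      (by linarith) (by linarith)).mul_left C
    rwa [show 1 - d - (1 + d) = -2 * d by ring, ← funext hterm] at this
  have hd0 : d ≠ 0 := hd2.ne
  rw [hsum.tsum_eq, hγ 0, add_comm 1 d, Gamma_add_one hd0]
  simp only [Nat.cast_zero, zero_add]
  field_simp
  ring
end

section
/- Let -1/2 < d < 0 and γ(h) = (Γ(1−2d)/(Γ(1−d)·Γ(d)))·Γ(h+d)/Γ(h+1−d). Then as n → ∞, −2(n−1)·∑_{h=n−1}^∞ γ(h) → +∞. -/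
/-!
Write `A(x) = Γ(x + d) / Γ(x - d)`. The functional equation of `Γ` gives the telescoping identity
`A(x + 1) - A(x) = 2d · Γ(x + d) / Γ(x + 1 - d)`, so the tail `∑_{h ≥ m} γ(h)` equals
`C · A(m) / (-2d)` once we know `A(x) → 0`, where `C = Γ(1 - 2d) / (Γ(1 - d) Γ(d))`.
Wendel's inequality `Γ(x + c) ≤ Γ(x) x^c` (a consequence of the log-convexity of `Γ`) squeezes
`A(x)` between `(x + d)^{2d}` and `(x - d - 1)^{2d}`. Hence `-2m · ∑_{h ≥ m} γ(h) = (C/d) · m A(m)`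
with `C/d > 0` and `m A(m) ≥ (m + d)^{1 + 2d} → ∞`.
-/

open Filter Real Topology

namespace Real

/-- Wendel's inequality: log-convexity of `Γ` along `x + c = (1 - c) x + c (x + 1)`. -/
theorem Gamma_add_le_Gamma_mul_rpow {x c : ℝ} (hx : 0 < x) (hc0 : 0 < c) (hc1 : c < 1) :
    Gamma (x + c) ≤ Gamma x * x ^ c := by
  have hΓ := Gamma_pos_of_pos hx
  have h := Gamma_mul_add_mul_le_rpow_Gamma_mul_rpow_Gamma hx (by linarith : 0 < x + 1)
    (sub_pos.2 hc1) hc0 (by ring)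
  rw [show (1 - c) * x + c * (x + 1) = x + c by ring, Gamma_add_one hx.ne',
    mul_rpow hx.le hΓ.le] at h
  calc Gamma (x + c) ≤ Gamma x ^ (1 - c) * (x ^ c * Gamma x ^ c) := h
    _ = Gamma x * x ^ c := by
      rw [mul_left_comm, ← rpow_add hΓ, sub_add_cancel, rpow_one, mul_comm]

theorem Gamma_neg_of_neg_one_lt_of_neg {s : ℝ} (hs1 : -1 < s) (hs0 : s < 0) : Gamma s < 0 := by
  have h := Gamma_pos_of_pos (by linarith : 0 < s + 1)
  rw [Gamma_add_one hs0.ne] at h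
  exact neg_of_mul_pos_right h hs0.le

end Real

noncomputable def gammaRatio (d x : ℝ) : ℝ := Gamma (x + d) / Gamma (x - d)

section GammaRatio

variable {d x : ℝ}

theorem gammaRatio_add_one_sub (hxd : 0 < x + d) (hxd' : 0 < x - d) :
    gammaRatio d (x + 1) - gammaRatio d x = 2 * d * (Gamma (x + d) / Gamma (x + 1 - d)) := by
  have hnum : Gamma (x + 1 + d) = (x + d) * Gamma (x + d) := by
    rw [← Gamma_add_one hxd.ne']; ring_nf
  have hden : Gamma (x + 1 - d) = (x - d) * Gamma (x - d) := by
    rw [← Gamma_add_one hxd'.ne']; ring_nf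
  have hΓ := (Gamma_pos_of_pos hxd').ne'
  rw [gammaRatio, gammaRatio, hnum, hden]
  field_simp
  ring

variable (hd1 : -(1 / 2) < d) (hd2 : d < 0)
include hd1 hd2

theorem gammaRatio_le_rpow (hx : 0 < x - d - 1) : gammaRatio d x ≤ (x - d - 1) ^ (2 * d) := by
  have hW := Gamma_add_le_Gamma_mul_rpow hx (by linarith : 0 < 1 + 2 * d) (by linarith)
  have hden : Gamma (x - d) = (x - d - 1) * Gamma (x - d - 1) := by
    rw [← Gamma_add_one hx.ne', sub_add_cancel]
  rw [show x - d - 1 + (1 + 2 * d) = x + d by ring, rpow_add hx, rpow_one] at hW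
  rw [gammaRatio, hden, div_le_iff₀ (mul_pos hx (Gamma_pos_of_pos hx))]
  linarith

theorem rpow_le_gammaRatio (hx : 0 < x + d) : (x + d) ^ (2 * d) ≤ gammaRatio d x := by
  have hW := Gamma_add_le_Gamma_mul_rpow hx (by linarith : 0 < -(2 * d)) (by linarith)
  rw [show x + d + -(2 * d) = x - d by ring] at hW
  rw [gammaRatio, le_div_iff₀ (Gamma_pos_of_pos (by linarith))]
  calc (x + d) ^ (2 * d) * Gamma (x - d)
      ≤ (x + d) ^ (2 * d) * (Gamma (x + d) * (x + d) ^ (-(2 * d))) := by gcongr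
    _ = Gamma (x + d) := by
      rw [mul_left_comm, ← rpow_add hx, add_neg_cancel, rpow_zero, mul_one]

theorem tendsto_gammaRatio_atTop : Tendsto (gammaRatio d) atTop (𝓝 0) := by
  have hlim : Tendsto (fun x => (x - d - 1) ^ (2 * d)) atTop (𝓝 0) := by
    rw [show 2 * d = -(-(2 * d)) by ring]
    exact (tendsto_rpow_neg_atTop (by linarith)).comp
      (tendsto_atTop_atTop.2 fun b => ⟨b + d + 1, fun x hx => by linarith⟩)
  refine squeeze_zero' ?_ ?_ hlim
  · filter_upwards [eventually_gt_atTop (-d)] with x hx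
    exact div_nonneg (Gamma_pos_of_pos (by linarith)).le (Gamma_pos_of_pos (by linarith)).le
  · filter_upwards [eventually_gt_atTop (d + 1)] with x hx
    exact gammaRatio_le_rpow hd1 hd2 (by linarith)

theorem tendsto_mul_gammaRatio_atTop : Tendsto (fun x => x * gammaRatio d x) atTop atTop := by
  have hlim : Tendsto (fun x => (x + d) ^ (1 + 2 * d)) atTop atTop :=
    (tendsto_rpow_atTop (by linarith)).comp
      (tendsto_atTop_atTop.2 fun b => ⟨b - d, fun x hx => by linarith⟩)
  refine tendsto_atTop_mono' _ ?_ hlim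
  filter_upwards [eventually_gt_atTop (-d)] with x hx
  have hxd : 0 < x + d := by linarith
  calc (x + d) ^ (1 + 2 * d) = (x + d) * (x + d) ^ (2 * d) := by rw [rpow_add hxd, rpow_one]
    _ ≤ x * gammaRatio d x :=
      mul_le_mul (by linarith) (rpow_le_gammaRatio hd1 hd2 hxd) (by positivity) (by linarith)

theorem hasSum_Gamma_div_Gamma (hx : 0 < x + d) :
    HasSum (fun h : ℕ => Gamma (x + h + d) / Gamma (x + h + 1 - d))
      (gammaRatio d x / (-(2 * d))) := by
  have hterm (h : ℕ) : Gamma (x + h + d) / Gamma (x + h + 1 - d)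
      = (gammaRatio d (x + ↑(h + 1)) - gammaRatio d (x + h)) / (2 * d) := by
    have hxh : 0 < x + h + d := by linarith [h.cast_nonneg (α := ℝ)]
    rw [Nat.cast_succ, ← add_assoc, gammaRatio_add_one_sub hxh (by linarith)]
    field_simp [hd2.ne]
  rw [hasSum_iff_tendsto_nat_of_nonneg]
  · simp only [hterm, ← Finset.sum_div,
      Finset.sum_range_sub (fun i : ℕ => gammaRatio d (x + i)), Nat.cast_zero, add_zero]
    have hA := (tendsto_gammaRatio_atTop hd1 hd2).comp
      (tendsto_atTop_add_const_left _ x tendsto_natCast_atTop_atTop)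
    rw [show gammaRatio d x / (-(2 * d)) = (0 - gammaRatio d x) / (2 * d) by ring]
    exact (hA.sub_const _).div_const _
  · intro h
    have hxh : 0 < x + h + d := by linarith [h.cast_nonneg (α := ℝ)]
    exact div_nonneg (Gamma_pos_of_pos hxh).le (Gamma_pos_of_pos (by linarith)).le

end GammaRatio

theorem tail_sum_diverges (d : ℝ) (hd1 : -(1 / 2) < d) (hd2 : d < 0)
    (γ : ℕ → ℝ)
    (hγ : ∀ h : ℕ, γ h = Real.Gamma (1 - 2 * d) / (Real.Gamma (1 - d) * Real.Gamma d) *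
        (Real.Gamma ((h : ℝ) + d) / Real.Gamma ((h : ℝ) + 1 - d))) :
    Filter.Tendsto (fun n : ℕ => -2 * ((n : ℝ) - 1) * ∑' h : ℕ, γ ((n - 1) + h))
      Filter.atTop Filter.atTop := by
  set C := Real.Gamma (1 - 2 * d) / (Real.Gamma (1 - d) * Real.Gamma d)
  have hC : 0 < C / d := by
    refine div_pos_of_neg_of_neg (div_neg_of_pos_of_neg (Gamma_pos_of_pos (by linarith)) ?_) hd2
    exact mul_neg_of_pos_of_neg (Gamma_pos_of_pos (by linarith))
      (Gamma_neg_of_neg_one_lt_of_neg (by linarith) hd2)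
  have htail (m : ℕ) (hm : 1 ≤ m) :
      C / d * (m * gammaRatio d m) = -2 * (m : ℝ) * ∑' h : ℕ, γ (m + h) := by
    have hsum := (hasSum_Gamma_div_Gamma hd1 hd2 (x := m)
      (by linarith [(Nat.one_le_cast.2 hm : (1 : ℝ) ≤ m)])).mul_left C
    simp only [hγ, Nat.cast_add]
    rw [hsum.tsum_eq]
    field_simp
  have hm : Tendsto (fun m : ℕ => -2 * (m : ℝ) * ∑' h : ℕ, γ (m + h)) atTop atTop :=
    (((tendsto_mul_gammaRatio_atTop hd1 hd2).comp tendsto_natCast_atTop_atTop).const_mul_atTop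
      hC).congr' ((eventually_ge_atTop 1).mono htail)
  refine (hm.comp (tendsto_sub_atTop_nat 1)).congr' ?_
  filter_upwards [eventually_ge_atTop 1] with n hn
  simp [Function.comp, Nat.cast_sub hn]
end

section
/- Let 1/2 < β < 1 and suppose θ_i ≤ C·i^{−β + k(1−2β)/2} for all i ≥ 1, where k ≥ 1 is an integer with (k+1)(2β−1) < 1. Then there exists C' > 0 such that ∑_{i=1}^∞ θ_i·θ_{i+h} ≤ C'·h^{(k+1)(1−2β)} for all h ≥ 1, and moreover h^{(k+1)(1−2β)} = o(h^{k(1−2β)}) as h → ∞. -/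
open Set Filter Real

private lemma anti_rpow_neg (a : ℝ) (ha : 0 < a) (c : ℝ) (hc : 1 ≤ c) (n : ℕ) :
    AntitoneOn (fun x : ℝ => x ^ (-a)) (Icc c (c + n)) := by
  intro x hx y hy hxy
  exact Real.rpow_le_rpow_of_nonpos (lt_of_lt_of_le one_pos (hc.trans hx.1)) hxy (by linarith)

private lemma aux_head (a : ℝ) (ha0 : 0 < a) (ha1 : a < 1) (h : ℕ) (hh : 1 ≤ h) :
    ∑ i ∈ Finset.range h, ((i : ℝ) + 1) ^ (-a) ≤ 1 + (h : ℝ) ^ (1 - a) / (1 - a) := by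
  obtain ⟨m, rfl⟩ : ∃ m, h = m + 1 := ⟨h - 1, by omega⟩
  rw [Finset.sum_range_succ']
  have key : ∑ i ∈ Finset.range m, (((i : ℕ) : ℝ) + 1 + 1) ^ (-a)
      ≤ ∫ x in (1:ℝ)..(1 + (m : ℝ)), x ^ (-a) := by
    have H := AntitoneOn.sum_le_integral (f := fun x : ℝ => x ^ (-a)) (x₀ := 1) (a := m)
      (anti_rpow_neg a ha0 1 le_rfl m)
    refine le_trans (le_of_eq ?_) H
    apply Finset.sum_congr rfl
    intro i _
    push_cast
    ring_nf
  have hint : ∫ x in (1:ℝ)..(1 + (m : ℝ)), x ^ (-a)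
      = ((1 + (m : ℝ)) ^ (-a + 1) - 1 ^ (-a + 1)) / (-a + 1) := by
    apply integral_rpow (Or.inl (by linarith))
  have hpos : (0:ℝ) ≤ (1 + (m:ℝ)) ^ (-a + 1) := Real.rpow_nonneg (by positivity) _
  rw [hint, Real.one_rpow] at key
  rw [show (-a + 1 : ℝ) = 1 - a from by ring] at key hpos
  have h1a : (0:ℝ) < 1 - a := by linarith
  push_cast
  have h0 : ((0:ℝ) + 1) ^ (-a) = 1 := by norm_num
  rw [h0]
  have hco : ((m:ℝ) + 1) ^ (1 - a) = (1 + (m:ℝ)) ^ (1 - a) := by rw [add_comm]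
  rw [hco]
  have hdiv : ((1 + (m:ℝ)) ^ (1 - a) - 1) / (1 - a) ≤ (1 + (m:ℝ)) ^ (1 - a) / (1 - a) := by
    rw [div_le_div_iff₀ h1a h1a]
    nlinarith
  linarith

private lemma aux_tail (r : ℝ) (hr : 1 < r) (h : ℕ) (hh : 1 ≤ h) :
    ∑' i : ℕ, ((h : ℝ) + (i : ℝ) + 1) ^ (-r) ≤ (h : ℝ) ^ (1 - r) / (r - 1) := by
  have hh1 : (1:ℝ) ≤ (h:ℝ) := by exact_mod_cast hh
  have hh0 : (0:ℝ) < (h:ℝ) := by linarith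
  apply Real.tsum_le_of_sum_range_le
  · intro n; exact Real.rpow_nonneg (by positivity) _
  intro n
  have key : ∑ i ∈ Finset.range n, ((h : ℝ) + (i : ℝ) + 1) ^ (-r)
      ≤ ∫ x in (h:ℝ)..((h:ℝ) + (n : ℝ)), x ^ (-r) := by
    have H := AntitoneOn.sum_le_integral (f := fun x : ℝ => x ^ (-r)) (x₀ := (h:ℝ)) (a := n)
      (anti_rpow_neg r (by linarith) (h:ℝ) hh1 n)
    refine le_trans (le_of_eq ?_) H
    apply Finset.sum_congr rfl
    intro i _
    push_cast
    ring_nf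
  have hint : ∫ x in (h:ℝ)..((h:ℝ) + (n : ℝ)), x ^ (-r)
      = (((h:ℝ) + (n : ℝ)) ^ (-r + 1) - (h:ℝ) ^ (-r + 1)) / (-r + 1) := by
    apply integral_rpow
    refine Or.inr ⟨by intro hc; linarith, ?_⟩
    rw [Set.uIcc_of_le (le_add_of_nonneg_right (by positivity))]
    intro hc
    have := hc.1
    linarith
  rw [hint] at key
  have hpos : (0:ℝ) ≤ ((h:ℝ) + (n:ℝ)) ^ (-r + 1) := Real.rpow_nonneg (by positivity) _
  have hr1 : (0:ℝ) < r - 1 := by linarith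
  have hexp : (-r + 1 : ℝ) = 1 - r := by ring
  rw [hexp] at key hpos
  calc ∑ i ∈ Finset.range n, ((h : ℝ) + (i : ℝ) + 1) ^ (-r)
      ≤ (((h:ℝ) + (n : ℝ)) ^ (1 - r) - (h:ℝ) ^ (1 - r)) / (1 - r) := key
    _ = ((h:ℝ) ^ (1 - r) - ((h:ℝ) + (n : ℝ)) ^ (1 - r)) / (r - 1) := by
        have h1 : (1 - r : ℝ) ≠ 0 := by intro hc; linarith
        have h2 : (r - 1 : ℝ) ≠ 0 := by intro hc; linarith
        field_simp
        ring
    _ ≤ (h : ℝ) ^ (1 - r) / (r - 1) := by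
        rw [div_le_div_iff₀ hr1 hr1]
        nlinarith

theorem remainder_covariance_bound (β : ℝ) (hβ1 : 1 / 2 < β) (hβ2 : β < 1)
    (k : ℕ) (hk : 1 ≤ k) (hkβ : ((k : ℝ) + 1) * (2 * β - 1) < 1)
    (θ : ℕ → ℝ) (hθ0 : ∀ i, 0 ≤ θ i) (C : ℝ)
    (hθ : ∀ i : ℕ, 1 ≤ i → θ i ≤ C * (i : ℝ) ^ (-β + (k : ℝ) * (1 - 2 * β) / 2)) :
    (∃ C' : ℝ, 0 < C' ∧ ∀ h : ℕ, 1 ≤ h →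
        ∑' i : ℕ, θ (i + 1) * θ (i + 1 + h) ≤ C' * (h : ℝ) ^ (((k : ℝ) + 1) * (1 - 2 * β))) ∧
      Filter.Tendsto
        (fun h : ℕ => (h : ℝ) ^ (((k : ℝ) + 1) * (1 - 2 * β)) / (h : ℝ) ^ ((k : ℝ) * (1 - 2 * β)))
        Filter.atTop (nhds 0) := by
  have hk1 : (1:ℝ) ≤ (k:ℝ) := by exact_mod_cast hk
  set a : ℝ := β - (k : ℝ) * (1 - 2 * β) / 2 with ha_def
  have hid : ((k:ℝ) + 1) * (2 * β - 1) = 2 * a - 1 := by rw [ha_def]; ring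
  have ha1 : 1 / 2 < a := by nlinarith [mul_pos (show (0:ℝ) < (k:ℝ)+1 by linarith) (show (0:ℝ) < 2*β-1 by linarith)]
  have ha2 : a < 1 := by linarith
  have ha0 : 0 < a := by linarith
  have he : ((k : ℝ) + 1) * (1 - 2 * β) = 1 - 2 * a := by rw [ha_def]; ring
  have hθ' : ∀ i : ℕ, 1 ≤ i → θ i ≤ C * (i : ℝ) ^ (-a) := by
    intro i hi
    have := hθ i hi
    rwa [show -β + (k : ℝ) * (1 - 2 * β) / 2 = -a by rw [ha_def]; ring] at this
  have hC : 0 ≤ C := by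
    have := hθ' 1 le_rfl
    have h0 := hθ0 1
    rw [Nat.cast_one, Real.one_rpow, mul_one] at this
    linarith
  constructor
  · -- main bound
    set K : ℝ := (1 + 1 / (1 - a)) + 1 / (2 * a - 1) with hK_def
    have hKpos : 0 < K := by
      have h1 : 0 < 1 / (1 - a) := one_div_pos.2 (by linarith)
      have h2 : 0 < 1 / (2 * a - 1) := one_div_pos.2 (by linarith)
      rw [hK_def]; linarith
    have hCCK : 0 ≤ C * C * K := mul_nonneg (mul_nonneg hC hC) hKpos.le
    refine ⟨C * C * K + 1, by linarith, ?_⟩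
    intro h hh
    rw [he]
    have hh1 : (1:ℝ) ≤ (h:ℝ) := by exact_mod_cast hh
    have hh0 : (0:ℝ) < (h:ℝ) := by linarith
    set f : ℕ → ℝ := fun i => ((i : ℝ) + 1) ^ (-a) * ((i : ℝ) + 1 + (h : ℝ)) ^ (-a) with hf_def
    have hfnn : ∀ i, 0 ≤ f i := fun i =>
      mul_nonneg (Real.rpow_nonneg (by positivity) _) (Real.rpow_nonneg (by positivity) _)
    have hs2a : Summable (fun i : ℕ => ((i : ℝ) + 1) ^ (-(2 * a))) := by
      have h1 : Summable (fun n : ℕ => (n : ℝ) ^ (-(2 * a))) :=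
        Real.summable_nat_rpow.2 (by linarith)
      have := (summable_nat_add_iff 1).2 h1
      refine this.congr fun i => ?_
      push_cast
      ring_nf
    have hfle : ∀ i : ℕ, f i ≤ ((i : ℝ) + 1) ^ (-(2 * a)) := by
      intro i
      have hb : (0:ℝ) < (i:ℝ) + 1 := by positivity
      have h2 : ((i : ℝ) + 1 + (h : ℝ)) ^ (-a) ≤ ((i : ℝ) + 1) ^ (-a) :=
        Real.rpow_le_rpow_of_nonpos hb (by linarith) (by linarith)
      calc f i ≤ ((i : ℝ) + 1) ^ (-a) * ((i : ℝ) + 1) ^ (-a) :=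
            mul_le_mul_of_nonneg_left h2 (Real.rpow_nonneg (by positivity) _)
        _ = ((i : ℝ) + 1) ^ (-(2 * a)) := by
            rw [← Real.rpow_add hb]; ring_nf
    have hf : Summable f := Summable.of_nonneg_of_le hfnn hfle hs2a
    -- head bound
    have head : ∑ i ∈ Finset.range h, f i ≤ (1 + 1 / (1 - a)) * (h : ℝ) ^ (1 - 2 * a) := by
      have step1 : ∑ i ∈ Finset.range h, f i
          ≤ (∑ i ∈ Finset.range h, ((i : ℝ) + 1) ^ (-a)) * (h : ℝ) ^ (-a) := by
        rw [Finset.sum_mul]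
        apply Finset.sum_le_sum
        intro i _
        apply mul_le_mul_of_nonneg_left _ (Real.rpow_nonneg (by positivity) _)
        have hi : (0:ℝ) ≤ (i:ℝ) := Nat.cast_nonneg i
        exact Real.rpow_le_rpow_of_nonpos hh0 (by linarith) (by linarith)
      have step2 : (∑ i ∈ Finset.range h, ((i : ℝ) + 1) ^ (-a)) * (h : ℝ) ^ (-a)
          ≤ (1 + (h : ℝ) ^ (1 - a) / (1 - a)) * (h : ℝ) ^ (-a) :=
        mul_le_mul_of_nonneg_right (aux_head a ha0 ha2 h hh) (Real.rpow_nonneg (by positivity) _)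
      have hmul : (h : ℝ) ^ (1 - a) * (h : ℝ) ^ (-a) = (h : ℝ) ^ (1 - 2 * a) := by
        rw [← Real.rpow_add hh0]; ring_nf
      have hle : (h : ℝ) ^ (-a) ≤ (h : ℝ) ^ (1 - 2 * a) :=
        Real.rpow_le_rpow_of_exponent_le hh1 (by linarith)
      have h1a : (0:ℝ) < 1 - a := by linarith
      calc ∑ i ∈ Finset.range h, f i
          ≤ (1 + (h : ℝ) ^ (1 - a) / (1 - a)) * (h : ℝ) ^ (-a) := step1.trans step2
        _ = (h : ℝ) ^ (-a) + ((h : ℝ) ^ (1 - a) * (h : ℝ) ^ (-a)) / (1 - a) := by ring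
        _ = (h : ℝ) ^ (-a) + (h : ℝ) ^ (1 - 2 * a) / (1 - a) := by rw [hmul]
        _ ≤ (h : ℝ) ^ (1 - 2 * a) + (h : ℝ) ^ (1 - 2 * a) / (1 - a) := by linarith
        _ = (1 + 1 / (1 - a)) * (h : ℝ) ^ (1 - 2 * a) := by ring
    -- tail bound
    have tail : ∑' i : ℕ, f (i + h) ≤ (h : ℝ) ^ (1 - 2 * a) / (2 * a - 1) := by
      have hg : Summable (fun i : ℕ => ((h : ℝ) + (i : ℝ) + 1) ^ (-(2 * a))) := by
        apply Summable.of_nonneg_of_le (fun i => Real.rpow_nonneg (by positivity) _) _ hs2a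
        intro i
        exact Real.rpow_le_rpow_of_nonpos (by positivity) (by linarith) (by linarith)
      have hterm : ∀ i : ℕ, f (i + h) ≤ ((h : ℝ) + (i : ℝ) + 1) ^ (-(2 * a)) := by
        intro i
        have hb : (0:ℝ) < (h:ℝ) + (i:ℝ) + 1 := by positivity
        have e1 : ((i + h : ℕ) : ℝ) + 1 = (h : ℝ) + (i : ℝ) + 1 := by push_cast; ring
        have h2 : ((h : ℝ) + (i : ℝ) + 1 + (h : ℝ)) ^ (-a) ≤ ((h : ℝ) + (i : ℝ) + 1) ^ (-a) :=
          Real.rpow_le_rpow_of_nonpos hb (by linarith) (by linarith)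
        calc f (i + h) = (((i + h : ℕ) : ℝ) + 1) ^ (-a) * (((i + h : ℕ) : ℝ) + 1 + (h : ℝ)) ^ (-a) := rfl
          _ ≤ ((h : ℝ) + (i : ℝ) + 1) ^ (-a) * ((h : ℝ) + (i : ℝ) + 1) ^ (-a) := by
              rw [e1]
              exact mul_le_mul_of_nonneg_left h2 (Real.rpow_nonneg (by positivity) _)
          _ = ((h : ℝ) + (i : ℝ) + 1) ^ (-(2 * a)) := by rw [← Real.rpow_add hb]; ring_nf
      have hfs : Summable (fun i : ℕ => f (i + h)) := (summable_nat_add_iff h).2 hf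
      calc ∑' i : ℕ, f (i + h) ≤ ∑' i : ℕ, ((h : ℝ) + (i : ℝ) + 1) ^ (-(2 * a)) :=
            Summable.tsum_le_tsum hterm hfs hg
        _ ≤ (h : ℝ) ^ (1 - 2 * a) / (2 * a - 1) := by
            have := aux_tail (2 * a) (by linarith) h hh
            convert this using 3 <;> ring
    have hsplit : ∑' i : ℕ, f i ≤ K * (h : ℝ) ^ (1 - 2 * a) := by
      rw [← Summable.sum_add_tsum_nat_add h hf, hK_def]
      calc (∑ i ∈ Finset.range h, f i) + ∑' i : ℕ, f (i + h)
          ≤ (1 + 1 / (1 - a)) * (h : ℝ) ^ (1 - 2 * a) + (h : ℝ) ^ (1 - 2 * a) / (2 * a - 1) :=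
            add_le_add head tail
        _ = ((1 + 1 / (1 - a)) + 1 / (2 * a - 1)) * (h : ℝ) ^ (1 - 2 * a) := by ring
    -- termwise bound of θ product
    have hterm : ∀ i : ℕ, θ (i + 1) * θ (i + 1 + h) ≤ C * C * f i := by
      intro i
      have h1 : θ (i + 1) ≤ C * ((i : ℝ) + 1) ^ (-a) := by
        have := hθ' (i + 1) (by omega)
        rwa [show ((i + 1 : ℕ) : ℝ) = (i : ℝ) + 1 by push_cast; ring] at this
      have h2 : θ (i + 1 + h) ≤ C * ((i : ℝ) + 1 + (h : ℝ)) ^ (-a) := by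
        have := hθ' (i + 1 + h) (by omega)
        rwa [show ((i + 1 + h : ℕ) : ℝ) = (i : ℝ) + 1 + (h : ℝ) by push_cast; ring] at this
      calc θ (i + 1) * θ (i + 1 + h)
          ≤ (C * ((i : ℝ) + 1) ^ (-a)) * (C * ((i : ℝ) + 1 + (h : ℝ)) ^ (-a)) :=
            mul_le_mul h1 h2 (hθ0 _) (by positivity)
        _ = C * C * f i := by rw [hf_def]; ring
    have hgs : Summable (fun i : ℕ => C * C * f i) := hf.mul_left _
    have hθs : Summable (fun i : ℕ => θ (i + 1) * θ (i + 1 + h)) :=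
      Summable.of_nonneg_of_le (fun i => mul_nonneg (hθ0 _) (hθ0 _)) hterm hgs
    have hrp : 0 < (h : ℝ) ^ (1 - 2 * a) := Real.rpow_pos_of_pos hh0 _
    calc ∑' i : ℕ, θ (i + 1) * θ (i + 1 + h)
        ≤ ∑' i : ℕ, C * C * f i := Summable.tsum_le_tsum hterm hθs hgs
      _ = C * C * ∑' i : ℕ, f i := tsum_mul_left
      _ ≤ C * C * (K * (h : ℝ) ^ (1 - 2 * a)) := by
          apply mul_le_mul_of_nonneg_left hsplit (by positivity)
      _ ≤ (C * C * K + 1) * (h : ℝ) ^ (1 - 2 * a) := by nlinarith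
  · -- tendsto part
    have h2β : 0 < 2 * β - 1 := by linarith
    have hlim : Filter.Tendsto (fun h : ℕ => (h : ℝ) ^ (-(2 * β - 1))) Filter.atTop (nhds 0) :=
      (tendsto_rpow_neg_atTop h2β).comp tendsto_natCast_atTop_atTop
    apply hlim.congr'
    filter_upwards [Filter.eventually_ge_atTop 1] with h hh
    have hh0 : (0:ℝ) < (h:ℝ) := by exact_mod_cast Nat.lt_of_lt_of_le Nat.zero_lt_one hh
    rw [← Real.rpow_sub hh0]
    congr 1
    ring
end

section
/- Let 1/2 < β < 1, k ≥ 1 an integer, and set p = −β + (k−1)(1−2β)/2 and q = −β + k(1−2β)/2. Suppose u_i ≤ C·i^{p} and θ_i ≤ C·i^{q} for i ≥ 1. If k(2β−1) < 1, then ∑_{i=1}^∞ u_i·θ_{i+h} = O(h^{(k+1/2)(1−2β)}) as h → ∞, which is o(h^{k(1−2β)}). -/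
/-!
With `p = -1/2 + k(1-2β)/2` and `q = p + (1-2β)/2` we have `-1 < p ≤ 0`, `q < 0` and
`p + q + 1 = (k+1/2)(1-2β) < 0`. Splitting `∑ i^p (i+h)^q` at `i = h`, the head is at most
`h^q ∑_{i ≤ h} i^p ≲ h^(p+1+q)` (telescope the tangent bounds of the concave `x ↦ x^(p+1)`),
and the tail at most `∑_{i > h} i^(p+q) ≲ ∫_h^∞ x^(p+q) dx ≲ h^(p+q+1)`.
-/

open Real Finset Filter

lemma rpow_add_one_sub_rpow_ge {d x : ℝ} (hd0 : 0 ≤ d) (hd1 : d ≤ 1) (hx : 0 ≤ x) :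
    d * (x + 1) ^ (d - 1) ≤ (x + 1) ^ d - x ^ d := by
  have hslope := (concaveOn_rpow hd0 hd1).le_slope_of_hasDerivAt (Set.mem_Ici.2 hx)
    (Set.mem_Ici.2 (by linarith)) (lt_add_one x) (hasDerivAt_rpow_const (Or.inl (by positivity)))
  simpa [slope_def_field] using hslope

lemma sum_range_rpow_le {p : ℝ} (hp0 : -1 < p) (hp1 : p ≤ 0) (n : ℕ) :
    ∑ i ∈ range n, ((i : ℝ) + 1) ^ p ≤ (n : ℝ) ^ (p + 1) / (p + 1) := by
  have hp : 0 < p + 1 := by linarith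
  rw [le_div_iff₀ hp, sum_mul]
  calc ∑ i ∈ range n, ((i : ℝ) + 1) ^ p * (p + 1)
      ≤ ∑ i ∈ range n, (((i + 1 : ℕ) : ℝ) ^ (p + 1) - (i : ℝ) ^ (p + 1)) := by
        gcongr with i
        have := rpow_add_one_sub_rpow_ge hp.le (by linarith) (Nat.cast_nonneg' i)
        push_cast
        simpa [mul_comm] using this
    _ = (n : ℝ) ^ (p + 1) := by
        rw [sum_range_sub (fun i : ℕ ↦ (i : ℝ) ^ (p + 1)), Nat.cast_zero, zero_rpow hp.ne', sub_zero]

lemma sum_Ico_rpow_le {e : ℝ} (he : e < -1) {h : ℕ} (hh : 1 ≤ h) (n : ℕ) :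
    ∑ i ∈ Ico h n, ((i : ℝ) + 1) ^ e ≤ (h : ℝ) ^ (e + 1) / -(e + 1) := by
  have hh' : (0 : ℝ) < h := by exact_mod_cast hh
  have he' : 0 < -(e + 1) := by linarith
  rcases le_total n h with hn | hn
  · rw [Ico_eq_empty_of_le hn, sum_empty]
    positivity
  have hanti : AntitoneOn (fun x : ℝ ↦ x ^ e) (Set.Icc (h : ℝ) n) := fun x hx y _ hxy ↦
    rpow_le_rpow_of_nonpos (hh'.trans_le hx.1) hxy (by linarith)
  have hzero : (0 : ℝ) ∉ Set.uIcc (h : ℝ) n := by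
    rw [Set.uIcc_of_le (by exact_mod_cast hn)]
    exact fun h0 ↦ hh'.not_ge h0.1
  calc ∑ i ∈ Ico h n, ((i : ℝ) + 1) ^ e
      = ∑ i ∈ Ico h n, ((i + 1 : ℕ) : ℝ) ^ e := by push_cast; rfl
    _ ≤ ∫ x in (h : ℝ)..n, x ^ e := hanti.sum_le_integral_Ico hn
    _ = ((h : ℝ) ^ (e + 1) - (n : ℝ) ^ (e + 1)) / -(e + 1) := by
        rw [integral_rpow (Or.inr ⟨by linarith, hzero⟩), div_neg, ← neg_div, neg_sub]
    _ ≤ (h : ℝ) ^ (e + 1) / -(e + 1) := by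
        gcongr
        exact sub_le_self _ (by positivity)

lemma sum_range_rpow_mul_rpow_add_le {p q : ℝ} (hp0 : -1 < p) (hp1 : p ≤ 0) (hq : q ≤ 0)
    (hpq : p + q < -1) {h : ℕ} (hh : 1 ≤ h) (n : ℕ) :
    ∑ i ∈ range n, ((i : ℝ) + 1) ^ p * ((i : ℝ) + 1 + h) ^ q ≤
      (1 / (p + 1) + 1 / -(p + q + 1)) * (h : ℝ) ^ (p + q + 1) := by
  have hh' : (0 : ℝ) < h := by exact_mod_cast hh
  -- Below `i = h` bound `(i + 1 + h) ^ q` by `h ^ q`, above it by `(i + 1) ^ q`.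
  set g : ℕ → ℝ := fun i ↦ ((i : ℝ) + 1) ^ p * ((i : ℝ) + 1 + h) ^ q
  have head : ∑ i ∈ range h, g i ≤ (h : ℝ) ^ (p + 1) / (p + 1) * (h : ℝ) ^ q := by
    refine (sum_le_sum fun i _ ↦ ?_).trans ((sum_mul ..).symm.trans_le
      (mul_le_mul_of_nonneg_right (sum_range_rpow_le hp0 hp1 h) (by positivity)))
    exact mul_le_mul_of_nonneg_left
      (rpow_le_rpow_of_nonpos hh' (by linarith [(i.cast_nonneg : (0 : ℝ) ≤ i)]) hq) (by positivity)
  have tail : ∑ i ∈ Ico h (h + n), g i ≤ (h : ℝ) ^ (p + q + 1) / -(p + q + 1) := by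
    refine (sum_le_sum fun i _ ↦ ?_).trans (sum_Ico_rpow_le hpq hh _)
    have hi : (0 : ℝ) < i + 1 := by positivity
    rw [rpow_add hi]
    exact mul_le_mul_of_nonneg_left (rpow_le_rpow_of_nonpos hi (by linarith) hq) (by positivity)
  calc ∑ i ∈ range n, g i ≤ ∑ i ∈ range (h + n), g i :=
        sum_le_sum_of_subset_of_nonneg (range_subset_range.2 (by omega))
          fun i _ _ ↦ by positivity
    _ = ∑ i ∈ range h, g i + ∑ i ∈ Ico h (h + n), g i := (sum_range_add_sum_Ico g (by omega)).symm
    _ ≤ (h : ℝ) ^ (p + 1) / (p + 1) * (h : ℝ) ^ q + (h : ℝ) ^ (p + q + 1) / -(p + q + 1) :=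
        add_le_add head tail
    _ = _ := by rw [div_mul_eq_mul_div, ← rpow_add hh', add_right_comm]; ring

lemma tsum_mul_shift_le_of_le_rpow {u θ : ℕ → ℝ} {C p q : ℝ} (hp0 : -1 < p) (hp1 : p ≤ 0)
    (hq : q ≤ 0) (hpq : p + q < -1) (hu0 : ∀ i, 0 ≤ u i) (hθ0 : ∀ i, 0 ≤ θ i)
    (hu : ∀ i : ℕ, 1 ≤ i → u i ≤ C * (i : ℝ) ^ p) (hθ : ∀ i : ℕ, 1 ≤ i → θ i ≤ C * (i : ℝ) ^ q)
    {h : ℕ} (hh : 1 ≤ h) :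
    ∑' i, u (i + 1) * θ (i + 1 + h) ≤
      C ^ 2 * ((1 / (p + 1) + 1 / -(p + q + 1)) * (h : ℝ) ^ (p + q + 1)) := by
  have hC : 0 ≤ C := by simpa using (hu0 1).trans (hu 1 le_rfl)
  refine Real.tsum_le_of_sum_range_le (fun i ↦ mul_nonneg (hu0 _) (hθ0 _)) fun n ↦ ?_
  refine le_trans ?_ (mul_le_mul_of_nonneg_left
    (sum_range_rpow_mul_rpow_add_le hp0 hp1 hq hpq hh n) (sq_nonneg C))
  rw [mul_sum]
  refine sum_le_sum fun i _ ↦ ?_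
  have hui := hu (i + 1) (by omega)
  have hθi := hθ (i + 1 + h) (by omega)
  push_cast at hui hθi
  calc u (i + 1) * θ (i + 1 + h) ≤ (C * ((i : ℝ) + 1) ^ p) * (C * ((i : ℝ) + 1 + h) ^ q) :=
        mul_le_mul hui hθi (hθ0 _) (by positivity)
    _ = _ := by ring

theorem mixed_covariance_bound_general (β : ℝ) (hβ1 : 1 / 2 < β)
    (k : ℕ) (hkβ : (k : ℝ) * (2 * β - 1) < 1)
    (u θ : ℕ → ℝ) (hu0 : ∀ i, 0 ≤ u i) (hθ0 : ∀ i, 0 ≤ θ i) (C : ℝ)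
    (hu : ∀ i : ℕ, 1 ≤ i → u i ≤ C * (i : ℝ) ^ (-β + ((k : ℝ) - 1) * (1 - 2 * β) / 2))
    (hθ : ∀ i : ℕ, 1 ≤ i → θ i ≤ C * (i : ℝ) ^ (-β + (k : ℝ) * (1 - 2 * β) / 2)) :
    (∃ C' : ℝ, 0 < C' ∧ ∀ h : ℕ, 1 ≤ h →
        ∑' i : ℕ, u (i + 1) * θ (i + 1 + h) ≤ C' * (h : ℝ) ^ (((k : ℝ) + 1 / 2) * (1 - 2 * β))) ∧
      Filter.Tendsto
        (fun h : ℕ =>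
          (h : ℝ) ^ (((k : ℝ) + 1 / 2) * (1 - 2 * β)) / (h : ℝ) ^ ((k : ℝ) * (1 - 2 * β)))
        Filter.atTop (nhds 0) := by
  set p := -β + ((k : ℝ) - 1) * (1 - 2 * β) / 2 with hp_def
  set q := -β + (k : ℝ) * (1 - 2 * β) / 2 with hq_def
  have hkβ0 : 0 ≤ (k : ℝ) * (2 * β - 1) := mul_nonneg k.cast_nonneg (by linarith)
  have hp0 : -1 < p := by linarith
  have hp1 : p ≤ 0 := by linarith
  have hq : q ≤ 0 := by linarith
  have hpq : p + q < -1 := by linarith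
  have hexp : ((k : ℝ) + 1 / 2) * (1 - 2 * β) = p + q + 1 := by ring
  set K := 1 / (p + 1) + 1 / -(p + q + 1)
  have hK : 0 < K := by
    have : 0 < p + 1 := by linarith
    have : 0 < -(p + q + 1) := by linarith
    positivity
  refine ⟨⟨(C ^ 2 + 1) * K, by positivity, fun h hh ↦ ?_⟩, ?_⟩
  · rw [hexp, mul_assoc]
    refine (tsum_mul_shift_le_of_le_rpow hp0 hp1 hq hpq hu0 hθ0 hu hθ hh).trans ?_
    gcongr
    linarith
  · refine ((tendsto_rpow_neg_atTop (by linarith : 0 < (2 * β - 1) / 2)).comp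
      tendsto_natCast_atTop_atTop).congr' ?_
    filter_upwards [eventually_gt_atTop 0] with h hh
    rw [Function.comp_apply, ← rpow_sub (by exact_mod_cast hh)]
    ring_nf

theorem mixed_covariance_bound (β : ℝ) (hβ1 : 1 / 2 < β) (hβ2 : β < 1)
    (k : ℕ) (hk : 1 ≤ k) (hkβ : (k : ℝ) * (2 * β - 1) < 1)
    (u θ : ℕ → ℝ) (hu0 : ∀ i, 0 ≤ u i) (hθ0 : ∀ i, 0 ≤ θ i) (C : ℝ)
    (hu : ∀ i : ℕ, 1 ≤ i → u i ≤ C * (i : ℝ) ^ (-β + ((k : ℝ) - 1) * (1 - 2 * β) / 2))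
    (hθ : ∀ i : ℕ, 1 ≤ i → θ i ≤ C * (i : ℝ) ^ (-β + (k : ℝ) * (1 - 2 * β) / 2)) :
    (∃ C' : ℝ, 0 < C' ∧ ∀ h : ℕ, 1 ≤ h →
        ∑' i : ℕ, u (i + 1) * θ (i + 1 + h) ≤ C' * (h : ℝ) ^ (((k : ℝ) + 1 / 2) * (1 - 2 * β))) ∧
      Filter.Tendsto
        (fun h : ℕ =>
          (h : ℝ) ^ (((k : ℝ) + 1 / 2) * (1 - 2 * β)) / (h : ℝ) ^ ((k : ℝ) * (1 - 2 * β)))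
        Filter.atTop (nhds 0) :=
  mixed_covariance_bound_general β hβ1 k hkβ u θ hu0 hθ0 C hu hθ
end

section
/- Let (Y_j) be a stationary process with summable autocovariance γ satisfying γ(0) + 2∑_{h=1}^∞ γ(h) = 0 and γ(h) < 0 for h ≥ 1. Then ∑_{i=1}^{n−1} ∑_{j=1}^{n−1} γ(i−j) = −2(n−1)·∑_{h=n−1}^∞ γ(h) − 2·∑_{h=1}^{n−2} h·γ(h), and both terms on the right are nonnegative. -/
lemma my_Icc_step (a b : ℤ) (h : a ≤ b + 1) :
    Finset.Icc a (b+1) = insert (b+1) (Finset.Icc a b) := by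
  ext x; simp only [Finset.mem_Icc, Finset.mem_insert]; omega

lemma my_sum_step (f : ℤ → ℝ) (a b : ℤ) (h : a ≤ b + 1) :
    ∑ i ∈ Finset.Icc a (b+1), f i = (∑ i ∈ Finset.Icc a b, f i) + f (b+1) := by
  rw [my_Icc_step a b h, Finset.sum_insert (by simp), add_comm]

lemma my_reflect (f : ℤ → ℝ) (m : ℤ) :
    ∑ j ∈ Finset.Icc 1 m, f (m + 1 - j) = ∑ j ∈ Finset.Icc 1 m, f j := by
  apply Finset.sum_nbij' (fun j => m + 1 - j) (fun j => m + 1 - j) <;>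
    simp only [Finset.mem_Icc] <;> intros <;>
      first
        | trivial
        | omega

theorem partial_sum_variance_identity (γ : ℤ → ℝ)
    (heven : ∀ h : ℤ, γ (-h) = γ h)
    (habs : Summable (fun h : ℤ => |γ h|))
    (hzero : γ 0 + 2 * ∑' h : ℕ, γ ((h : ℤ) + 1) = 0)
    (hneg : ∀ h : ℤ, 1 ≤ h → γ h < 0) :
    ∀ n : ℕ, 2 ≤ n →
      (∑ i ∈ Finset.Icc (1 : ℤ) ((n : ℤ) - 1), ∑ j ∈ Finset.Icc (1 : ℤ) ((n : ℤ) - 1), γ (i - j))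
        = -2 * ((n : ℝ) - 1) * (∑' h : ℕ, γ (((n : ℤ) - 1) + (h : ℤ)))
          - 2 * ∑ h ∈ Finset.Icc (1 : ℤ) ((n : ℤ) - 2), (h : ℝ) * γ h ∧
      0 ≤ -2 * ((n : ℝ) - 1) * (∑' h : ℕ, γ (((n : ℤ) - 1) + (h : ℤ))) ∧
      0 ≤ -2 * ∑ h ∈ Finset.Icc (1 : ℤ) ((n : ℤ) - 2), (h : ℝ) * γ h := by
  have hsum : Summable γ := habs.of_abs
  set f : ℤ → ℝ := fun a => ∑' h : ℕ, γ (a + (h : ℤ)) with hf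
  have hsumf : ∀ a : ℤ, Summable (fun h : ℕ => γ (a + (h : ℤ))) := by
    intro a
    exact hsum.comp_injective (fun x y hxy => by
      simpa using (by omega : a + (x:ℤ) = a + (y:ℤ) → x = y) hxy)
  have frec : ∀ a : ℤ, f a = γ a + f (a + 1) := by
    intro a
    show (∑' h : ℕ, γ (a + (h:ℤ))) = γ a + ∑' h : ℕ, γ ((a+1) + (h:ℤ))
    rw [Summable.tsum_eq_zero_add (hsumf a)]
    simp only [Nat.cast_zero, add_zero, Nat.cast_add, Nat.cast_one]
    congr 1
    exact tsum_congr fun h => by congr 1; ring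
  have hz : γ 0 = -2 * f 1 := by
    have : f 1 = ∑' h : ℕ, γ ((h : ℤ) + 1) := tsum_congr fun h => by congr 1; ring
    rw [this]; linarith
  -- telescoping
  have tel : ∀ m : ℕ, f 1 = (∑ d ∈ Finset.Icc (1:ℤ) (m:ℤ), γ d) + f ((m:ℤ) + 1) := by
    intro m
    induction m with
    | zero => simp
    | succ k ih =>
        push_cast
        rw [my_sum_step γ 1 k (by omega)]
        rw [ih, frec ((k:ℤ)+1)]
        ring
  -- main identity for m ≥ 1
  have main : ∀ m : ℕ, 1 ≤ m →
      (∑ i ∈ Finset.Icc (1:ℤ) (m:ℤ), ∑ j ∈ Finset.Icc (1:ℤ) (m:ℤ), γ (i - j))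
        = -2 * (m:ℝ) * f (m:ℤ) - 2 * ∑ h ∈ Finset.Icc (1:ℤ) ((m:ℤ) - 1), (h:ℝ) * γ h := by
    intro m hm
    induction m, hm using Nat.le_induction with
    | base => simp; linarith [hz]
    | succ k hk ih =>
        push_cast
        have inner : ∀ i : ℤ, ∑ j ∈ Finset.Icc (1:ℤ) ((k:ℤ)+1), γ (i-j)
            = (∑ j ∈ Finset.Icc (1:ℤ) (k:ℤ), γ (i-j)) + γ (i-((k:ℤ)+1)) :=
          fun i => my_sum_step (fun j => γ (i-j)) 1 (k:ℤ) (by omega)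
        rw [my_sum_step (fun i => ∑ j ∈ Finset.Icc (1:ℤ) ((k:ℤ)+1), γ (i-j)) 1 (k:ℤ) (by omega)]
        simp only [inner, Finset.sum_add_distrib]
        have hcol : ∑ i ∈ Finset.Icc (1:ℤ) (k:ℤ), γ (i - ((k:ℤ)+1))
            = ∑ i ∈ Finset.Icc (1:ℤ) (k:ℤ), γ i := by
          rw [← my_reflect γ (k:ℤ)]
          exact Finset.sum_congr rfl fun i _ => by rw [← heven ((k:ℤ)+1-i)]; congr 1; ring
        have hrow : ∑ j ∈ Finset.Icc (1:ℤ) (k:ℤ), γ ((k:ℤ)+1-j)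
            = ∑ j ∈ Finset.Icc (1:ℤ) (k:ℤ), γ j := my_reflect γ (k:ℤ)
        have hdiag : γ ((k:ℤ)+1-((k:ℤ)+1)) = γ 0 := by norm_num
        have hs : ∑ h ∈ Finset.Icc (1:ℤ) ((k:ℤ)+1-1), (h:ℝ) * γ h
            = (∑ h ∈ Finset.Icc (1:ℤ) ((k:ℤ)-1), (h:ℝ)*γ h) + (k:ℝ) * γ (k:ℤ) := by
          have e : (k:ℤ)+1-1 = ((k:ℤ)-1)+1 := by ring
          rw [e, my_sum_step (fun h => (h:ℝ)*γ h) 1 ((k:ℤ)-1) (by omega)]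
          norm_num
        rw [hcol, hrow, hdiag, hs]
        have htel := tel k
        have hfrec := frec (k:ℤ)
        linear_combination ih - 2*(k:ℝ)*hfrec + hz - 2*htel
  intro n hn
  have hcast1 : ((n - 1 : ℕ) : ℤ) = (n:ℤ) - 1 := by omega
  have hcast2 : ((n - 1 : ℕ) : ℝ) = (n:ℝ) - 1 := by
    rw [Nat.cast_sub (by omega : 1 ≤ n)]; norm_num
  have main' := main (n-1) (by omega)
  rw [hcast1, hcast2, show (n:ℤ)-1-1 = (n:ℤ)-2 from by ring] at main'
  simp only [hf] at main'
  have ht : (∑' h : ℕ, γ (((n:ℤ)-1) + (h:ℤ))) ≤ 0 :=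
    tsum_nonpos fun h => (hneg _ (by omega : (1:ℤ) ≤ ((n:ℤ)-1) + (h:ℤ))).le
  have hn2 : (2:ℝ) ≤ (n:ℝ) := by exact_mod_cast hn
  have hsneg : ∑ h ∈ Finset.Icc (1:ℤ) ((n:ℤ)-2), (h:ℝ) * γ h ≤ 0 := by
    apply Finset.sum_nonpos
    intro h hmem
    rw [Finset.mem_Icc] at hmem
    have h1 : (0:ℝ) ≤ (h:ℝ) := by exact_mod_cast (by omega : (0:ℤ) ≤ h)
    exact mul_nonpos_of_nonneg_of_nonpos h1 (hneg h hmem.1).le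
  refine ⟨main', ?_, by linarith⟩
  nlinarith [mul_nonneg (by linarith : (0:ℝ) ≤ (n:ℝ)-1) (by linarith : (0:ℝ) ≤ -(∑' h : ℕ, γ (((n:ℤ)-1) + (h:ℤ))))]
end
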